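/- arXiv:math/9907010 — 5 statements merged into one kernel-verified Lean document; each statement's English description precedes it below -/
import Mathlib

section
/- Let A be a k×n matrix over R of rank k, and let g ∈ R be a greatest common divisor of the k×k minors of A (i.e., g divides each k×k minor and every common divisor of the k×k minors divides g). If P is a principal associated prime of M_A = R^k/AR^n, then P = ⟨π⟩ for some irreducible element π ∈ R that divides g. -/
noncomputable section

/-- The ring `R = ℤ[u₁^{±1},…,u_d^{±1}]`, realized as the group algebra of `ℤ^d` over `ℤ`. -/
abbrev LaurentR (d : ℕ) : Type := AddMonoidAlgebra ℤ (Fin d → ℤ)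

/-- The submodule `A·Rⁿ ⊆ R^k` generated by the columns of the `k × n` matrix `A`. -/
def colSpan {d k n : ℕ} (A : Matrix (Fin k) (Fin n) (LaurentR d)) :
    Submodule (LaurentR d) (Fin k → LaurentR d) :=
  Submodule.span (LaurentR d) (Set.range fun j i => A i j)

/-- The module `M_A = R^k / A·Rⁿ`. -/
abbrev MA {d k n : ℕ} (A : Matrix (Fin k) (Fin n) (LaurentR d)) : Type :=
  (Fin k → LaurentR d) ⧸ colSpan A

/-! Each maximal minor `δ` of `A` annihilates `M_A`, since `δ • x = B (adj B x)` for the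
corresponding square submatrix `B`; hence `δ` lies in every associated prime. Rank `k` makes some
maximal minor nonzero, so a principal associated prime `P` is nonzero and its generator is a prime
element dividing every maximal minor, hence dividing their gcd `g`. -/

open Matrix Submodule

namespace Matrix

variable {m n : Type*} [Fintype m] [DecidableEq m]

theorem exists_det_submatrix_ne_zero_of_rank_eq_card {K : Type*} [Field K] [Fintype n]
    (M : Matrix m n K) (h : M.rank = Fintype.card m) :
    ∃ c : m ↪ n, (M.submatrix id c).det ≠ 0 := by
  rw [rank_eq_finrank_span_cols] at h
  obtain ⟨f, hf_col, -, hf_li⟩ := exists_fun_fin_finrank_span_eq K (Set.range M.col)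
  choose c hc using hf_col
  let e : m ≃ Fin _ := Fintype.equivFinOfCardEq h.symm
  have hcols : (M.submatrix id (c ∘ e)).col = f ∘ e := funext fun i => hc (e i)
  have hli : LinearIndependent K (M.submatrix id (c ∘ e)).col :=
    hcols ▸ hf_li.comp e e.injective
  refine ⟨⟨c ∘ e, fun i j hij => ?_⟩, ?_⟩
  · exact hli.injective (congrArg M.col hij)
  · exact ((isUnit_iff_isUnit_det _).mp (linearIndependent_cols_iff_isUnit.mp hli)).ne_zero

theorem det_submatrix_smul_mem_span_cols {R : Type*} [CommRing R] (A : Matrix m n R)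
    (c : m → n) (x : m → R) : (A.submatrix id c).det • x ∈ span R (Set.range A.col) := by
  set B := A.submatrix id c
  have hB : B.det • x = B *ᵥ (B.adjugate *ᵥ x) := by
    rw [mulVec_mulVec, mul_adjugate, smul_mulVec, one_mulVec]
  rw [hB]
  exact span_mono (Set.range_comp_subset_range c A.col)
    (B.range_mulVecLin ▸ LinearMap.mem_range_self B.mulVecLin _)

theorem det_submatrix_mem_of_mem_associatedPrimes {R : Type*} [CommRing R]
    (A : Matrix m n R) (c : m → n) {P : Ideal R}
    (hP : P ∈ associatedPrimes R ((m → R) ⧸ span R (Set.range A.col))) :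
    (A.submatrix id c).det ∈ P := by
  refine IsAssociatedPrime.annihilator_le hP (mem_annihilator.mpr fun y _ => ?_)
  obtain ⟨x, rfl⟩ := Submodule.Quotient.mk_surjective _ y
  rw [← Quotient.mk_smul, Quotient.mk_eq_zero]
  exact det_submatrix_smul_mem_span_cols A c x

end Matrix

theorem principal_associated_prime_divides_gcd_general (d k n : ℕ)
    (A : Matrix (Fin k) (Fin n) (LaurentR d))
    -- `A` has rank `k` over the fraction field of `R`
    (hrank : (A.map (algebraMap (LaurentR d) (FractionRing (LaurentR d)))).rank = k)
    -- `g` is a greatest common divisor of the `k × k` minors of `A`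
    (g : LaurentR d)
    (hg_gcd : ∀ h : LaurentR d, (∀ c : Fin k ↪ Fin n, h ∣ (A.submatrix id c).det) → h ∣ g)
    -- `P` is a principal associated prime of `M_A`
    (P : Ideal (LaurentR d))
    (hP : P ∈ associatedPrimes (LaurentR d) (MA A))
    (hPrin : P.IsPrincipal) :
    ∃ π : LaurentR d, Irreducible π ∧ π ∣ g ∧ P = Ideal.span {π} := by
  have hminor_mem (c : Fin k ↪ Fin n) : (A.submatrix id c).det ∈ P :=
    det_submatrix_mem_of_mem_associatedPrimes A c hP
  obtain ⟨c₀, hc₀⟩ := exists_det_submatrix_ne_zero_of_rank_eq_card _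
    (hrank.trans (Fintype.card_fin k).symm)
  have hminor_ne_zero : (A.submatrix id c₀).det ≠ 0 := fun h => hc₀ <| by
    rw [submatrix_map, ← RingHom.mapMatrix_apply, ← RingHom.map_det, h, map_zero]
  have hP_ne_bot : P ≠ ⊥ := fun h => hminor_ne_zero (by simpa [h] using hminor_mem c₀)
  have : P.IsPrime := hP.isPrime
  have hπ := IsPrincipal.prime_generator_of_isPrime P hP_ne_bot
  exact ⟨IsPrincipal.generator P, hπ.irreducible,
    hg_gcd _ fun c => (IsPrincipal.mem_iff_generator_dvd P).mp (hminor_mem c),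
    (Ideal.span_singleton_generator P).symm⟩

theorem principal_associated_prime_divides_gcd (d k n : ℕ)
    (A : Matrix (Fin k) (Fin n) (LaurentR d))
    -- `A` has rank `k` over the fraction field of `R`
    (hrank : (A.map (algebraMap (LaurentR d) (FractionRing (LaurentR d)))).rank = k)
    -- `g` is a greatest common divisor of the `k × k` minors of `A`
    (g : LaurentR d)
    (hg_dvd : ∀ c : Fin k ↪ Fin n, g ∣ (A.submatrix id c).det)
    (hg_gcd : ∀ h : LaurentR d, (∀ c : Fin k ↪ Fin n, h ∣ (A.submatrix id c).det) → h ∣ g)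
    -- `P` is a principal associated prime of `M_A`
    (P : Ideal (LaurentR d))
    (hP : P ∈ associatedPrimes (LaurentR d) (MA A))
    (hPrin : P.IsPrincipal) :
    ∃ π : LaurentR d, Irreducible π ∧ π ∣ g ∧ P = Ideal.span {π} :=
  principal_associated_prime_divides_gcd_general d k n A hrank g hg_gcd P hP hPrin
end
end

section
/- Let A be a k×n matrix over R of rank k, and let g ∈ R be a greatest common divisor of the k×k minors of A. Then the set of principal associated primes of M_A = R^k/AR^n is exactly the set of ideals ⟨π⟩ where π ranges over the irreducible elements of R dividing g. In particular, every irreducible factor of g generates an associated prime of M_A. -/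
/-!
Every maximal minor `δ` of `A` kills `M_A` (`δ • v = A_c (adj A_c v)`), so an associated prime
`(π)` contains all of them and `π ∣ g`; as some minor is nonzero, `π ≠ 0`.
Conversely, if a prime `π` divides every maximal minor, the image of `A` over `Frac(R/(π))` has
rank `< k`, so no `a ∉ (π)` can kill `M_A`: `Ann M_A ⊆ (π)`. A nonzero minor lies in `Ann M_A`,
so every prime between `Ann M_A` and `(π)` is nonzero and hence contains a prime element, which
must be associate to `π`. Thus `(π)` is a minimal prime of `Ann M_A`, hence associated.
`R` is a unique factorization domain as the localization of `ℤ[u₁,…,u_d]` at the monomials.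
-/

noncomputable section

open Matrix

namespace LaurentR

variable (d : ℕ)

def castExponent : (Fin d →₀ ℕ) →+ (Fin d → ℤ) :=
  Finsupp.coeFnAddHom.comp (Finsupp.mapRange.addMonoidHom (Nat.castAddMonoidHom ℤ))

variable {d} in
@[simp]
theorem castExponent_apply (m : Fin d →₀ ℕ) (i : Fin d) : castExponent d m i = m i := by
  simp [castExponent]

theorem castExponent_injective : Function.Injective (castExponent d) := fun a b h =>
  Finsupp.ext fun i => by simpa using congrFun h i

def ofMvPolynomial : MvPolynomial (Fin d) ℤ →+* LaurentR d :=
  AddMonoidAlgebra.mapDomainRingHom ℤ (castExponent d)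

theorem ofMvPolynomial_injective : Function.Injective (ofMvPolynomial d) :=
  AddMonoidAlgebra.mapDomain_injective (castExponent_injective d)

variable {d} in
theorem ofMvPolynomial_monomial (m : Fin d →₀ ℕ) (r : ℤ) :
    ofMvPolynomial d (MvPolynomial.monomial m r) = AddMonoidAlgebra.single (castExponent d m) r :=
  AddMonoidAlgebra.mapDomain_single

instance : Algebra (MvPolynomial (Fin d) ℤ) (LaurentR d) := (ofMvPolynomial d).toAlgebra

def monomials : Submonoid (MvPolynomial (Fin d) ℤ) :=
  MonoidHom.mrange (MvPolynomial.monomialOneHom ℤ (Fin d))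

variable {d} in
theorem exists_mul_monomial_eq (a : Fin d → ℤ) (r : ℤ) :
    ∃ m m' : Fin d →₀ ℕ, AddMonoidAlgebra.single a r * ofMvPolynomial d (MvPolynomial.monomial m 1)
      = ofMvPolynomial d (MvPolynomial.monomial m' r) := by
  refine ⟨Finsupp.equivFunOnFinite.symm fun i => (-a i).toNat,
    Finsupp.equivFunOnFinite.symm fun i => (a i).toNat, ?_⟩
  rw [ofMvPolynomial_monomial, ofMvPolynomial_monomial, AddMonoidAlgebra.single_mul_single, mul_one]
  congr 1
  funext i
  simp only [Pi.add_apply, castExponent_apply, Finsupp.equivFunOnFinite_symm_apply_apply]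
  omega

instance isLocalization : IsLocalization (monomials d) (LaurentR d) where
  map_units := by
    rintro ⟨_, m, rfl⟩
    change IsUnit (ofMvPolynomial d (MvPolynomial.monomial m.toAdd 1))
    rw [ofMvPolynomial_monomial]
    exact (Group.isUnit (Multiplicative.ofAdd _)).map (AddMonoidAlgebra.of ℤ (Fin d → ℤ))
  surj z := by
    induction z using AddMonoidAlgebra.induction_linear with
    | zero => exact ⟨(0, 1), by simp⟩
    | add z w hz hw =>
      obtain ⟨⟨x, s⟩, hx⟩ := hz
      obtain ⟨⟨y, t⟩, hy⟩ := hw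
      refine ⟨⟨x * t + y * s, s * t⟩, ?_⟩
      simp only [Submonoid.coe_mul, map_add, map_mul, ← hx, ← hy]
      ring
    | single a r =>
      obtain ⟨m, m', h⟩ := exists_mul_monomial_eq a r
      exact ⟨⟨MvPolynomial.monomial m' r, ⟨_, .ofAdd m, rfl⟩⟩, h⟩
  exists_of_eq h := ⟨1, by rw [ofMvPolynomial_injective d h]⟩

instance : UniqueFactorizationMonoid (LaurentR d) :=
  .of_isLocalization (monomials d) _

instance : IsNoetherianRing (LaurentR d) := Algebra.FiniteType.isNoetherianRing ℤ _

end LaurentR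

section Field

variable {F : Type*} [Field F] {m n : Type*} [Fintype m]

theorem Matrix.span_col_eq_top_of_rank_eq [Fintype n] (B : Matrix m n F)
    (h : B.rank = Fintype.card m) : Submodule.span F (Set.range B.col) = ⊤ := by
  rw [← range_mulVecLin]
  exact Submodule.eq_top_of_finrank_eq (by rw [← rank, h, Module.finrank_fintype_fun_eq_card])

theorem Matrix.exists_det_submatrix_ne_zero_of_span_col_eq_top [DecidableEq m] (B : Matrix m n F)
    (h : Submodule.span F (Set.range B.col) = ⊤) : ∃ c : m ↪ n, (B.submatrix id c).det ≠ 0 := by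
  obtain ⟨κ, a, ha, hspan, hli⟩ := exists_linearIndependent' F B.col
  let b := Module.Basis.mk hli (by rw [hspan, h])
  have : Fintype κ := FiniteDimensional.fintypeBasisIndex b
  have hcard : Fintype.card m = Fintype.card κ := by
    rw [← Module.finrank_fintype_fun_eq_card F, Module.finrank_eq_card_basis b]
  let e : m ≃ κ := Fintype.equivOfCardEq hcard
  refine ⟨e.toEmbedding.trans ⟨a, ha⟩, fun h0 => ?_⟩
  have hli' : LinearIndependent F (B.submatrix id (a ∘ e)).col := hli.comp e e.injective
  exact (isUnit_iff_ne_zero.mp ((isUnit_iff_isUnit_det _).mp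
    (linearIndependent_cols_iff_isUnit.mp hli'))) h0

end Field

section CommRing

variable {R : Type*} [CommRing R] {m n : Type*}

theorem Matrix.det_submatrix_smul_mem_span_col [Fintype m] [DecidableEq m] (A : Matrix m n R)
    (c : m → n) (v : m → R) : (A.submatrix id c).det • v ∈ Submodule.span R (Set.range A.col) := by
  set B := A.submatrix id c
  have hB : Submodule.span R (Set.range B.col) ≤ Submodule.span R (Set.range A.col) :=
    Submodule.span_mono (Set.range_comp_subset_range c A.col)
  have hadj : B *ᵥ (adjugate B *ᵥ v) = B.det • v := by
    rw [mulVec_mulVec, mul_adjugate, smul_mulVec, one_mulVec]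
  rw [← hadj]
  exact hB (range_mulVecLin B ▸ LinearMap.mem_range_self B.mulVecLin _)

theorem Matrix.map_mem_span_col {S : Type*} [CommRing S] (f : R →+* S) [Fintype n]
    {A : Matrix m n R} {v : m → R} (hv : v ∈ Submodule.span R (Set.range A.col)) :
    f ∘ v ∈ Submodule.span S (Set.range (A.map f).col) := by
  rw [← range_mulVecLin] at hv ⊢
  obtain ⟨w, rfl⟩ := hv
  exact ⟨f ∘ w, funext fun i => (RingHom.map_mulVec f A w i).symm⟩

end CommRing

abbrev Matrix.coker {R : Type*} [CommRing R] {m n : Type*} (A : Matrix m n R) : Type _ :=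
  (m → R) ⧸ Submodule.span R (Set.range A.col)

theorem Ideal.IsPrime.eq_span_singleton_of_le {R : Type*} [CommRing R] [IsDomain R]
    [UniqueFactorizationMonoid R] {Q : Ideal R} (hQ : Q.IsPrime) (hQ0 : Q ≠ ⊥) {π : R}
    (hπ : Prime π) (h : Q ≤ Ideal.span {π}) : Q = Ideal.span {π} := by
  obtain ⟨x, hxQ, hx⟩ := hQ.exists_mem_prime_of_ne_bot hQ0
  have hπx : Associated π x :=
    hπ.irreducible.associated_of_dvd hx.irreducible (Ideal.mem_span_singleton.mp (h hxQ))
  refine le_antisymm h ?_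
  rw [Ideal.span_singleton_eq_span_singleton.mpr hπx, Ideal.span_le, Set.singleton_subset_iff]
  exact hxQ

section Cokernel

variable {R : Type*} [CommRing R] {m n : Type*} (A : Matrix m n R)

theorem Matrix.det_submatrix_mem_annihilator_coker [Fintype m] [DecidableEq m] (c : m → n) :
    (A.submatrix id c).det ∈ Module.annihilator R A.coker := by
  refine Module.mem_annihilator.mpr fun x => ?_
  obtain ⟨v, rfl⟩ := Submodule.Quotient.mk_surjective _ x
  rw [← Submodule.Quotient.mk_smul, Submodule.Quotient.mk_eq_zero]
  exact A.det_submatrix_smul_mem_span_col c v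

variable {A} in
theorem Matrix.smul_mem_span_col_of_mem_annihilator_coker {a : R}
    (ha : a ∈ Module.annihilator R A.coker) (v : m → R) :
    a • v ∈ Submodule.span R (Set.range A.col) := by
  rw [← Submodule.Quotient.mk_eq_zero, Submodule.Quotient.mk_smul]
  exact Module.mem_annihilator.mp ha _

variable [Fintype m] [DecidableEq m] [Fintype n]

theorem Matrix.exists_map_det_submatrix_ne_zero_of_mem_annihilator_coker {F : Type*} [Field F]
    (ψ : R →+* F) {a : R} (ha : a ∈ Module.annihilator R A.coker) (hψa : ψ a ≠ 0) :
    ∃ c : m ↪ n, ψ (A.submatrix id c).det ≠ 0 := by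
  have hspan : Submodule.span F (Set.range (A.map ψ).col) = ⊤ := by
    rw [eq_top_iff, ← (Pi.basisFun F m).span_eq, Submodule.span_le]
    rintro _ ⟨i, rfl⟩
    have hi := map_mem_span_col ψ (smul_mem_span_col_of_mem_annihilator_coker ha (Pi.single i 1))
    have hψi : ψ ∘ (a • Pi.single i 1) = ψ a • Pi.basisFun F m i := by
      funext j
      by_cases hj : j = i <;> simp [hj]
    rw [hψi] at hi
    exact (Submodule.smul_mem_iff _ hψa).mp hi
  obtain ⟨c, hc⟩ := (A.map ψ).exists_det_submatrix_ne_zero_of_span_col_eq_top hspan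
  refine ⟨c, ?_⟩
  rwa [RingHom.map_det, RingHom.mapMatrix_apply, ← submatrix_map]

variable {A} in
theorem Matrix.annihilator_coker_le_span_singleton {π : R} (hπ : Prime π)
    (hdvd : ∀ c : m ↪ n, π ∣ (A.submatrix id c).det) :
    Module.annihilator R A.coker ≤ Ideal.span {π} := by
  have := (Ideal.span_singleton_prime hπ.ne_zero).mpr hπ
  let ψ := (algebraMap (R ⧸ Ideal.span {π}) (FractionRing (R ⧸ Ideal.span {π}))).comp
    (Ideal.Quotient.mk (Ideal.span {π}))
  have hψ : ∀ x, ψ x = 0 ↔ x ∈ Ideal.span {π} := fun x => by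
    simp [ψ, Ideal.Quotient.eq_zero_iff_mem]
  intro a ha
  by_contra hap
  obtain ⟨c, hc⟩ := A.exists_map_det_submatrix_ne_zero_of_mem_annihilator_coker ψ ha
    (mt (hψ a).mp hap)
  exact hc ((hψ _).mpr (Ideal.mem_span_singleton.mpr (hdvd c)))

variable [IsDomain R] [UniqueFactorizationMonoid R]

variable {A} in
theorem Matrix.span_singleton_mem_minimalPrimes_annihilator_coker {π : R} (hπ : Prime π)
    (hdvd : ∀ c : m ↪ n, π ∣ (A.submatrix id c).det) {c₀ : m ↪ n}
    (hc₀ : (A.submatrix id c₀).det ≠ 0) :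
    Ideal.span {π} ∈ (Module.annihilator R A.coker).minimalPrimes := by
  refine ⟨⟨(Ideal.span_singleton_prime hπ.ne_zero).mpr hπ,
    annihilator_coker_le_span_singleton hπ hdvd⟩, fun Q ⟨hQ, hann⟩ hle => ?_⟩
  have hQ0 : Q ≠ ⊥ := fun h0 =>
    hc₀ ((Submodule.mem_bot R).mp (h0 ▸ hann (A.det_submatrix_mem_annihilator_coker c₀)))
  exact (hQ.eq_span_singleton_of_le hQ0 hπ hle).ge

theorem Matrix.setOf_associatedPrimes_coker_isPrincipal_eq [IsNoetherianRing R]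
    {c₀ : m ↪ n} (hc₀ : (A.submatrix id c₀).det ≠ 0) {g : R}
    (hg_dvd : ∀ c : m ↪ n, g ∣ (A.submatrix id c).det)
    (hg_gcd : ∀ h : R, (∀ c : m ↪ n, h ∣ (A.submatrix id c).det) → h ∣ g) :
    {P | P ∈ associatedPrimes R A.coker ∧ P.IsPrincipal}
      = {P : Ideal R | ∃ π : R, Irreducible π ∧ π ∣ g ∧ P = Ideal.span {π}} := by
  ext P
  constructor
  · rintro ⟨hP, π, rfl⟩
    have hann : Module.annihilator R A.coker ≤ Ideal.span {π} :=
      Submodule.annihilator_top.symm.trans_le hP.annihilator_le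
    have hdet : ∀ c : m ↪ n, π ∣ (A.submatrix id c).det := fun c =>
      Ideal.mem_span_singleton.mp (hann (A.det_submatrix_mem_annihilator_coker c))
    have hπ0 : π ≠ 0 := by
      rintro rfl
      exact hc₀ (zero_dvd_iff.mp (hdet c₀))
    exact ⟨π, ((Ideal.span_singleton_prime hπ0).mp hP.isPrime).irreducible, hg_gcd π hdet, rfl⟩
  · rintro ⟨π, hπ, hπg, rfl⟩
    have hmin := span_singleton_mem_minimalPrimes_annihilator_coker hπ.prime
      (fun c => hπg.trans (hg_dvd c)) hc₀
    exact ⟨Module.associatedPrimes.minimalPrimes_annihilator_subset_associatedPrimes R _ hmin,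
      π, rfl⟩

end Cokernel

theorem principal_associated_primes_eq_irreducible_factors_of_gcd (d k n : ℕ)
    (A : Matrix (Fin k) (Fin n) (LaurentR d))
    -- `A` has rank `k` over the fraction field of `R`
    (hrank : (A.map (algebraMap (LaurentR d) (FractionRing (LaurentR d)))).rank = k)
    -- `g` is a greatest common divisor of the `k × k` minors of `A`
    (g : LaurentR d)
    (hg_dvd : ∀ c : Fin k ↪ Fin n, g ∣ (A.submatrix id c).det)
    (hg_gcd : ∀ h : LaurentR d, (∀ c : Fin k ↪ Fin n, h ∣ (A.submatrix id c).det) → h ∣ g) :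
    {P | P ∈ associatedPrimes (LaurentR d) (MA A) ∧ P.IsPrincipal}
      = {P : Ideal (LaurentR d) | ∃ π : LaurentR d,
          Irreducible π ∧ π ∣ g ∧ P = Ideal.span {π}} := by
  set f := algebraMap (LaurentR d) (FractionRing (LaurentR d))
  obtain ⟨c₀, hc₀⟩ := (A.map f).exists_det_submatrix_ne_zero_of_span_col_eq_top
    ((A.map f).span_col_eq_top_of_rank_eq (by rw [hrank, Fintype.card_fin]))
  refine A.setOf_associatedPrimes_coker_isPrincipal_eq (c₀ := c₀) (fun h0 => hc₀ ?_) hg_dvd hg_gcd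
  rw [submatrix_map, ← RingHom.mapMatrix_apply, ← RingHom.map_det, h0, map_zero]

end
end

section
/- Let A be a k×n matrix over R of rank k, and let B_1,…,B_m (m = C(n,k)) be the k×k submatrices of A. Then the following are equivalent: (i) there is no point z ∈ (S¹)^d with ev_z(det B_j) = 0 for all j = 1,…,m; (ii) for every associated prime P of M_A = R^k/AR^n, there is no point z ∈ (S¹)^d with ev_z(f) = 0 for all f ∈ P. -/
/-
Each maximal minor `det B` of `A` annihilates `M_A`, since `det B • x = B (adj B x)` lies in the
column span. Conversely, if `a` annihilates `M_A` then `A C = a • 1` for some matrix `C`; at a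
point `z` where `ev_z a ≠ 0` this makes the columns of `A(z)` span `ℂ^k`, so some maximal minor
does not vanish at `z`. Hence all maximal minors vanish at `z` iff `Ann M_A ⊆ ker ev_z`. As
`ker ev_z` is prime, the latter holds iff it contains a minimal prime over `Ann M_A`, and these
are associated primes of `M_A`, each of which contains `Ann M_A`.
-/

noncomputable section

/-- Evaluation of a Laurent polynomial `f ∈ R` at a point `z ∈ (ℂ∖{0})^d`:
the ring homomorphism sending `uᵢ` to `zᵢ`, computed as
`∑ over monomials m of (coefficient) * ∏ᵢ zᵢ^(mᵢ)`. -/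
def ev {d : ℕ} (z : Fin d → ℂ) (f : LaurentR d) : ℂ :=
  Finsupp.sum f.coeff fun m c => (c : ℂ) * ∏ i, z i ^ (m i)

/-- The set of associated primes of a module, with the December 2024 Mathlib meaning of
`associatedPrimes`: prime ideals equal to the annihilator of some element. -/
def annAssociatedPrimes (R : Type*) [CommRing R] (M : Type*) [AddCommGroup M] [Module R M] :
    Set (Ideal R) :=
  { I | I.IsPrime ∧ ∃ x : M, I = (Submodule.span R {x}).annihilator }

instance (d : ℕ) : AddMonoid.FG (Fin d → ℤ) :=
  AddGroup.fg_iff_addMonoid_fg.mp (Module.Finite.iff_addGroup_fg.mp inferInstance)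

instance (d : ℕ) : IsNoetherianRing (LaurentR d) :=
  Algebra.FiniteType.isNoetherianRing ℤ (LaurentR d)

section AssociatedPrimes

variable {R M : Type*} [CommRing R] [AddCommGroup M] [Module R M]

theorem annAssociatedPrimes_eq_associatedPrimes [IsNoetherianRing R] :
    annAssociatedPrimes R M = associatedPrimes R M := by
  ext P
  have hcolon (x : M) : (Submodule.span R {x}).annihilator = (⊥ : Submodule R M).colon {x} := by
    ext r
    rw [Submodule.mem_annihilator_span_singleton, Submodule.mem_colon_singleton,
      Submodule.mem_bot]
  rw [AssociatedPrimes.mem_iff, isAssociatedPrime_iff]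
  exact and_congr_right fun _ => exists_congr fun x => by rw [hcolon x]

theorem exists_mem_associatedPrimes_le_of_annihilator_le [IsNoetherianRing R] [Module.Finite R M]
    {Q : Ideal R} [Q.IsPrime] (hQ : Module.annihilator R M ≤ Q) :
    ∃ P ∈ associatedPrimes R M, P ≤ Q := by
  obtain ⟨P, hP, hPQ⟩ := Ideal.exists_minimalPrimes_le hQ
  exact ⟨P, Module.associatedPrimes.minimalPrimes_annihilator_subset_associatedPrimes R M hP,
    hPQ⟩

end AssociatedPrimes

namespace Matrix

variable {m n : Type*} [DecidableEq m] {S : Type*} [CommRing S]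

theorem det_submatrix_smul_mem_span_col_s7 [Fintype m] (A : Matrix m n S) (c : m ↪ n)
    (x : m → S) :
    (A.submatrix id c).det • x ∈ Submodule.span S (Set.range A.col) := by
  set B := A.submatrix id c
  have hB : Submodule.span S (Set.range B.col) ≤ Submodule.span S (Set.range A.col) :=
    Submodule.span_mono (Set.range_comp_subset_range c A.col)
  have hdet : B.det • x = B *ᵥ (B.adjugate *ᵥ x) := by
    rw [mulVec_mulVec, mul_adjugate, smul_mulVec, one_mulVec]
  rw [hdet]
  exact hB (B.range_mulVecLin ▸ LinearMap.mem_range_self B.mulVecLin _)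

theorem det_submatrix_mem_annihilator [Fintype m] (A : Matrix m n S) (c : m ↪ n) :
    (A.submatrix id c).det ∈
      Module.annihilator S ((m → S) ⧸ Submodule.span S (Set.range A.col)) := by
  rw [Submodule.annihilator_quotient, Submodule.mem_colon]
  exact fun x _ => det_submatrix_smul_mem_span_col_s7 A c x

theorem exists_mul_eq_smul_one_of_mem_annihilator [Fintype n] {A : Matrix m n S} {a : S}
    (ha : a ∈ Module.annihilator S ((m → S) ⧸ Submodule.span S (Set.range A.col))) :
    ∃ C : Matrix n m S, A * C = a • 1 := by
  rw [Submodule.annihilator_quotient, Submodule.mem_colon] at ha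
  have hcol (i : m) : ∃ v, A *ᵥ v = a • Pi.single i 1 := by
    rw [← A.coe_mulVecLin, ← LinearMap.mem_range, A.range_mulVecLin]
    exact ha _ (Set.mem_univ _)
  choose C hC using hcol
  refine ⟨(Matrix.of C)ᵀ, Matrix.ext fun i j => ?_⟩
  change (A *ᵥ C j) i = _
  rw [hC j]
  simp [Pi.single_apply, one_apply]

theorem exists_det_submatrix_ne_zero_of_mul_eq_one {K : Type*} [Field K] [Fintype m] [Fintype n]
    {A : Matrix m n K} {C : Matrix n m K} (hAC : A * C = 1) :
    ∃ c : m ↪ n, (A.submatrix id c).det ≠ 0 := by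
  -- a linearly independent subfamily of the columns that still spans `K^m` is a basis
  obtain ⟨κ, a, ha, hspan, hli⟩ := exists_linearIndependent' K A.col
  have hspan_top : Submodule.span K (Set.range A.col) = ⊤ := by
    rw [← A.range_mulVecLin, LinearMap.range_eq_top, coe_mulVecLin]
    exact mulVec_surjective_iff_exists_right_inverse.mpr ⟨C, hAC⟩
  let b : Module.Basis κ K (m → K) := .mk hli (by rw [hspan, hspan_top])
  let e : m ≃ κ := (Pi.basisFun K m).indexEquiv b
  refine ⟨⟨a ∘ e, ha.comp e.injective⟩, fun h => ?_⟩
  have hunit : IsUnit (A.submatrix id (a ∘ e)) :=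
    linearIndependent_cols_iff_isUnit.mp (hli.comp e e.injective)
  exact ((isUnit_iff_isUnit_det _).mp hunit).ne_zero h

theorem annihilator_le_ker_of_map_det_submatrix_eq_zero {K : Type*} [Field K] [Fintype m]
    [Fintype n] (φ : S →+* K) {A : Matrix m n S}
    (hA : ∀ c : m ↪ n, φ (A.submatrix id c).det = 0) :
    Module.annihilator S ((m → S) ⧸ Submodule.span S (Set.range A.col)) ≤ RingHom.ker φ := by
  intro a ha
  obtain ⟨C, hAC⟩ := exists_mul_eq_smul_one_of_mem_annihilator ha
  by_contra hφa
  rw [RingHom.mem_ker] at hφa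
  have hAC' : A.map φ * ((φ a)⁻¹ • C.map φ) = 1 := by
    rw [Matrix.mul_smul, ← Matrix.map_mul, hAC]
    ext i j
    by_cases hij : i = j <;> simp [one_apply, hij, hφa]
  obtain ⟨c, hc⟩ := exists_det_submatrix_ne_zero_of_mul_eq_one hAC'
  rw [submatrix_map, ← RingHom.mapMatrix_apply, ← RingHom.map_det] at hc
  exact hc (hA c)

end Matrix

def evRingHom {d : ℕ} (z : Fin d → ℂ) (hz : ∀ i, z i ≠ 0) : LaurentR d →+* ℂ :=
  AlgHom.toRingHom <| AddMonoidAlgebra.lift ℤ ℂ (Fin d → ℤ)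
    { toFun := fun m => ∏ i, z i ^ (Multiplicative.toAdd m i)
      map_one' := by simp
      map_mul' := fun a b => by
        simp only [toAdd_mul, Pi.add_apply, zpow_add₀ (hz _), Finset.prod_mul_distrib] }

theorem ev_eq_evRingHom {d : ℕ} (z : Fin d → ℂ) (hz : ∀ i, z i ≠ 0) (f : LaurentR d) :
    ev z f = evRingHom z hz f := by
  rw [evRingHom, AlgHom.toRingHom_eq_coe, RingHom.coe_coe, AddMonoidAlgebra.lift_apply, ev]
  exact Finsupp.sum_congr fun m _ => (zsmul_eq_mul _ _).symm

theorem expansive_iff_subdeterminants_have_no_common_zero_on_torus_general (d k n : ℕ)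
    (A : Matrix (Fin k) (Fin n) (LaurentR d)) :
    (¬ ∃ z : Fin d → ℂ, (∀ i, ‖z i‖ = 1) ∧
        ∀ c : Fin k ↪ Fin n, ev z (A.submatrix id c).det = 0)
      ↔ ∀ P ∈ annAssociatedPrimes (LaurentR d) (MA A),
          ¬ ∃ z : Fin d → ℂ, (∀ i, ‖z i‖ = 1) ∧ ∀ f ∈ P, ev z f = 0 := by
  rw [annAssociatedPrimes_eq_associatedPrimes]
  constructor
  · rintro hminors P hP ⟨z, hz, hzP⟩
    refine hminors ⟨z, hz, fun c => hzP _ (hP.annihilator_le ?_)⟩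
    rw [Submodule.annihilator_top]
    exact A.det_submatrix_mem_annihilator c
  · rintro hassoc ⟨z, hz, hzminors⟩
    have hz0 (i : Fin d) : z i ≠ 0 := norm_ne_zero_iff.mp (by rw [hz i]; exact one_ne_zero)
    have hann : Module.annihilator (LaurentR d) (MA A) ≤ RingHom.ker (evRingHom z hz0) :=
      Matrix.annihilator_le_ker_of_map_det_submatrix_eq_zero _ fun c =>
        (ev_eq_evRingHom z hz0 _).symm.trans (hzminors c)
    have := RingHom.ker_isPrime (evRingHom z hz0)
    obtain ⟨P, hP, hPker⟩ := exists_mem_associatedPrimes_le_of_annihilator_le hann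
    exact hassoc P hP ⟨z, hz, fun f hf => (ev_eq_evRingHom z hz0 f).trans (hPker hf)⟩

theorem expansive_iff_subdeterminants_have_no_common_zero_on_torus (d k n : ℕ)
    (A : Matrix (Fin k) (Fin n) (LaurentR d))
    -- `A` has rank `k` over the fraction field of `R`
    (hrank : (A.map (algebraMap (LaurentR d) (FractionRing (LaurentR d)))).rank = k) :
    (¬ ∃ z : Fin d → ℂ, (∀ i, ‖z i‖ = 1) ∧
        ∀ c : Fin k ↪ Fin n, ev z (A.submatrix id c).det = 0)
      ↔ ∀ P ∈ annAssociatedPrimes (LaurentR d) (MA A),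
          ¬ ∃ z : Fin d → ℂ, (∀ i, ‖z i‖ = 1) ∧ ∀ f ∈ P, ev z f = 0 :=
  expansive_iff_subdeterminants_have_no_common_zero_on_torus_general d k n A
end
end

section
/- Let A be a k×k matrix over R with det(A) ≠ 0. Then the set of associated primes of the R-module M_A = R^k/AR^k coincides with the set of associated primes of the cyclic R-module R/⟨det(A)⟩. -/
noncomputable section

/-!
Write `δ = det A`. Since `adj A * A = A * adj A = δ`, a vector `r • m` lies in the column span
of `A` iff `δ` divides every entry of `r • adj A m`. Hence the annihilator of `m` in `M_A` is the
intersection of the annihilators of the entries of `adj A m` in `R/(δ)`, and a prime ideal which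
is a finite intersection of ideals equals one of them.

Conversely, in a UFD the annihilator `{r | δ ∣ r g}` of `g` in `R/(δ)` is principal, `(h)` with
`h ∣ δ`, and `h` is prime if this ideal is. Then `A` is singular modulo `h`; lifting a kernel
vector gives `A z = h w` with `z ≢ 0 mod h`, and as `A` is injective the annihilator of `w` in
`M_A` is exactly `(h)`.

`R` is a Noetherian UFD, being the localization of `ℤ[u₁, …, u_d]` at its monomials.
-/

namespace MvPolynomial

variable (σ : Type*) (R : Type*) [CommSemiring R]

def intExponents : (σ →₀ ℕ) →+ (σ → ℤ) :=
  Finsupp.coeFnAddHom.comp (Finsupp.mapRange.addMonoidHom (Nat.castAddMonoidHom ℤ))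

theorem intExponents_injective : Function.Injective (intExponents σ) := by
  intro α β h
  ext i
  simpa [intExponents] using congrFun h i

instance : Algebra (MvPolynomial σ R) (AddMonoidAlgebra R (σ → ℤ)) :=
  (AddMonoidAlgebra.mapDomainRingHom R (intExponents σ)).toAlgebra

variable {σ R}

theorem algebraMap_monomial_eq_single (α : σ →₀ ℕ) (c : R) :
    algebraMap (MvPolynomial σ R) (AddMonoidAlgebra R (σ → ℤ)) (monomial α c) =
      AddMonoidAlgebra.single (intExponents σ α) c :=
  AddMonoidAlgebra.mapDomain_single

-- `g = g⁺ - g⁻`, with `a = g⁺` and `b = g⁻`.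
theorem exists_single_mul_algebraMap_monomial_eq [Finite σ] (g : σ → ℤ) (c : R) :
    ∃ a b : σ →₀ ℕ, AddMonoidAlgebra.single g c *
      algebraMap (MvPolynomial σ R) _ (monomial b 1) = algebraMap _ _ (monomial a c) := by
  refine ⟨Finsupp.equivFunOnFinite.symm fun i => (g i).toNat,
    Finsupp.equivFunOnFinite.symm fun i => (-g i).toNat, ?_⟩
  rw [algebraMap_monomial_eq_single, algebraMap_monomial_eq_single,
    AddMonoidAlgebra.single_mul_single, mul_one]
  congr 1
  ext i
  simp [intExponents]
  omega

instance isLocalization_mrange_monomialOneHom [Finite σ] :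
    IsLocalization (MonoidHom.mrange (monomialOneHom R σ)) (AddMonoidAlgebra R (σ → ℤ)) where
  map_units := by
    rintro ⟨_, α, rfl⟩
    change IsUnit (algebraMap _ _ (monomial α.toAdd 1))
    rw [algebraMap_monomial_eq_single]
    exact (Group.isUnit (Multiplicative.ofAdd (intExponents σ α.toAdd))).map
      (AddMonoidAlgebra.of R (σ → ℤ))
  surj z := by
    induction z using AddMonoidAlgebra.induction_linear with
    | zero => exact ⟨⟨0, 1⟩, by simp⟩
    | add x y hx hy =>
      obtain ⟨⟨p, s⟩, hp⟩ := hx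
      obtain ⟨⟨q, t⟩, hq⟩ := hy
      refine ⟨⟨p * t + q * s, s * t⟩, ?_⟩
      simp only [Submonoid.coe_mul, map_mul, map_add, ← hp, ← hq]
      ring
    | single g c =>
      obtain ⟨a, b, h⟩ := exists_single_mul_algebraMap_monomial_eq g c
      exact ⟨⟨monomial a c, ⟨_, b, rfl⟩⟩, h⟩
  exists_of_eq h :=
    ⟨1, congrArg _ (AddMonoidAlgebra.mapDomain_injective (intExponents_injective σ) h)⟩

end MvPolynomial

namespace AddMonoidAlgebra

variable {σ R : Type*} [Finite σ] [CommRing R]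

instance [IsNoetherianRing R] : IsNoetherianRing (AddMonoidAlgebra R (σ → ℤ)) :=
  IsLocalization.isNoetherianRing (MonoidHom.mrange (MvPolynomial.monomialOneHom R σ)) _
    inferInstance

instance [IsDomain R] [UniqueFactorizationMonoid R] :
    UniqueFactorizationMonoid (AddMonoidAlgebra R (σ → ℤ)) :=
  .of_isLocalization (MonoidHom.mrange (MvPolynomial.monomialOneHom R σ)) _

end AddMonoidAlgebra

theorem Submodule.mem_colon_bot_mk_iff {R M : Type*} [CommRing R] [AddCommGroup M] [Module R M]
    {N : Submodule R M} {m : M} {r : R} :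
    r ∈ (⊥ : Submodule R (M ⧸ N)).colon {Submodule.Quotient.mk m} ↔ r • m ∈ N := by
  rw [mem_colon_singleton, mem_bot, ← Quotient.mk_smul, Quotient.mk_eq_zero]

theorem Ideal.mem_colon_bot_mk_span_singleton_iff {R : Type*} [CommRing R] {a b r : R} :
    r ∈ (⊥ : Submodule R (R ⧸ Ideal.span {a})).colon {Ideal.Quotient.mk _ b} ↔
      a ∣ r * b := by
  rw [← Ideal.mem_span_singleton, ← smul_eq_mul]
  exact Submodule.mem_colon_bot_mk_iff

theorem UniqueFactorizationMonoid.exists_forall_dvd_mul_iff_dvd {R : Type*}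
    [CommMonoidWithZero R] [UniqueFactorizationMonoid R] {a : R} (ha : a ≠ 0) (b : R) :
    ∃ h, ∀ r, a ∣ r * b ↔ h ∣ r := by
  obtain ⟨h, b', c, hrel, rfl, rfl⟩ := exists_reduced_factors a ha b
  have hc : c ≠ 0 := left_ne_zero_of_mul ha
  refine ⟨h, fun r => ?_⟩
  rw [mul_left_comm, mul_dvd_mul_iff_left hc]
  exact ⟨hrel.dvd_of_dvd_mul_right, fun hr => hr.mul_right b'⟩

namespace Matrix

variable {R : Type*} [CommRing R] {ι : Type*} [Fintype ι] [DecidableEq ι]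

theorem smul_mem_range_mulVecLin_iff [IsDomain R] {A : Matrix ι ι R} (hA : A.det ≠ 0)
    (r : R) (m : ι → R) :
    r • m ∈ LinearMap.range A.mulVecLin ↔ ∀ i, A.det ∣ r * (A.adjugate *ᵥ m) i := by
  have adj_mulVec : ∀ x, A.adjugate *ᵥ (A *ᵥ x) = A.det • x := fun x => by
    rw [mulVec_mulVec, adjugate_mul, smul_mulVec, one_mulVec]
  constructor
  · rintro ⟨x, hx⟩ i
    refine ⟨x i, ?_⟩
    have := congrFun (adj_mulVec x) i
    rw [mulVecLin_apply] at hx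
    rw [hx, mulVec_smul] at this
    simpa using this
  · intro hdvd
    choose x hx using hdvd
    refine ⟨x, smul_right_injective (ι → R) hA ?_⟩
    calc A.det • (A *ᵥ x) = A *ᵥ (r • A.adjugate *ᵥ m) := by
          rw [← mulVec_smul]
          congr 1
          funext i
          simp [hx]
      _ = A.det • (r • m) := by
          rw [mulVec_smul, mulVec_mulVec, mul_adjugate, smul_mulVec, one_mulVec, smul_comm]

theorem exists_mulVec_eq_smul_of_dvd_det {A : Matrix ι ι R} {h : R} (hh : Prime h)
    (hdvd : h ∣ A.det) : ∃ z w : ι → R, (∃ i, ¬ h ∣ z i) ∧ A *ᵥ z = h • w := by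
  have : (Ideal.span {h}).IsPrime := (Ideal.span_singleton_prime hh.ne_zero).2 hh
  set q := Ideal.Quotient.mk (Ideal.span {h})
  have hdet : (A.map q).det = 0 := by
    rw [← RingHom.mapMatrix_apply, ← RingHom.map_det, Ideal.Quotient.eq_zero_iff_mem,
      Ideal.mem_span_singleton]
    exact hdvd
  obtain ⟨v, hv0, hv⟩ := exists_mulVec_eq_zero_iff.mpr hdet
  choose z hz using fun i => Ideal.Quotient.mk_surjective (v i)
  have hAz : ∀ i, h ∣ (A *ᵥ z) i := fun i => by
    rw [← Ideal.mem_span_singleton, ← Ideal.Quotient.eq_zero_iff_mem, RingHom.map_mulVec,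
      show q ∘ z = v from funext hz, hv, Pi.zero_apply]
  choose w hw using hAz
  refine ⟨z, w, ?_, funext hw⟩
  by_contra! hcon
  exact hv0 (funext fun i => by
    rw [← hz i, Pi.zero_apply, Ideal.Quotient.eq_zero_iff_mem, Ideal.mem_span_singleton]
    exact hcon i)

theorem exists_smul_mem_range_mulVecLin_iff_dvd [IsDomain R] {A : Matrix ι ι R}
    (hA : A.det ≠ 0) {h : R} (hh : Prime h) (hdvd : h ∣ A.det) :
    ∃ w : ι → R, ∀ r, r • w ∈ LinearMap.range A.mulVecLin ↔ h ∣ r := by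
  obtain ⟨z, w, ⟨i₀, hi₀⟩, hzw⟩ := exists_mulVec_eq_smul_of_dvd_det hh hdvd
  refine ⟨w, fun r => ⟨?_, ?_⟩⟩
  · rintro ⟨x, hx⟩
    rw [mulVecLin_apply] at hx
    have hxz : h • x = r • z := mulVec_injective_of_det_ne_zero hA <| by
      rw [mulVec_smul, mulVec_smul, hx, hzw, smul_comm]
    have hdvd_mul : h ∣ r * z i₀ := ⟨x i₀, by simpa using (congrFun hxz i₀).symm⟩
    exact (hh.dvd_or_dvd hdvd_mul).resolve_right hi₀
  · rintro ⟨e, rfl⟩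
    exact ⟨e • z, by rw [mulVecLin_apply, mulVec_smul, hzw, smul_smul, mul_comm]⟩

-- Mathlib's associated primes are radicals of annihilators; over a Noetherian ring
-- (`isAssociatedPrime_iff`) they are the annihilators themselves, as in the paper.
variable [IsDomain R] [IsNoetherianRing R]

theorem associatedPrimes_quotient_range_mulVecLin_subset {A : Matrix ι ι R} (hA : A.det ≠ 0) :
    associatedPrimes R ((ι → R) ⧸ LinearMap.range A.mulVecLin) ⊆
      associatedPrimes R (R ⧸ Ideal.span {A.det}) := by
  intro P hPmem
  obtain ⟨hP, x, rfl⟩ := isAssociatedPrime_iff.mp hPmem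
  obtain ⟨m, rfl⟩ := Submodule.Quotient.mk_surjective _ x
  set J : ι → Ideal R := fun i => (⊥ : Submodule R (R ⧸ Ideal.span {A.det})).colon
    {Ideal.Quotient.mk _ ((A.adjugate *ᵥ m) i)}
  have hPJ : (⊥ : Submodule R ((ι → R) ⧸ LinearMap.range A.mulVecLin)).colon
      {Submodule.Quotient.mk m} = Finset.univ.inf J := by
    ext r
    simp only [Submodule.mem_finsetInf, Finset.mem_univ, true_implies, J,
      Submodule.mem_colon_bot_mk_iff, smul_mem_range_mulVecLin_iff hA,
      Ideal.mem_colon_bot_mk_span_singleton_iff]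
  obtain ⟨i, -, hi⟩ := Ideal.eq_inf_of_isPrime_inf (hPJ ▸ hP)
  exact isAssociatedPrime_iff.mpr ⟨hP, _, hPJ.trans hi.symm⟩

theorem associatedPrimes_quotient_span_det_subset [UniqueFactorizationMonoid R]
    {A : Matrix ι ι R} (hA : A.det ≠ 0) :
    associatedPrimes R (R ⧸ Ideal.span {A.det}) ⊆
      associatedPrimes R ((ι → R) ⧸ LinearMap.range A.mulVecLin) := by
  intro P hPmem
  obtain ⟨hP, x, rfl⟩ := isAssociatedPrime_iff.mp hPmem
  obtain ⟨g, rfl⟩ := Ideal.Quotient.mk_surjective x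
  obtain ⟨h, hh⟩ := UniqueFactorizationMonoid.exists_forall_dvd_mul_iff_dvd hA g
  have hPh : (⊥ : Submodule R (R ⧸ Ideal.span {A.det})).colon {Ideal.Quotient.mk _ g} =
      Ideal.span {h} := by
    ext r
    rw [Ideal.mem_colon_bot_mk_span_singleton_iff, hh, Ideal.mem_span_singleton]
  have hdvd : h ∣ A.det := (hh _).mp (dvd_mul_right _ _)
  have hprime : Prime h :=
    (Ideal.span_singleton_prime (ne_zero_of_dvd_ne_zero hA hdvd)).mp (hPh ▸ hP)
  obtain ⟨w, hw⟩ := exists_smul_mem_range_mulVecLin_iff_dvd hA hprime hdvd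
  refine isAssociatedPrime_iff.mpr ⟨hP, Submodule.Quotient.mk w, ?_⟩
  ext r
  rw [hPh, Ideal.mem_span_singleton, Submodule.mem_colon_bot_mk_iff, hw]

theorem associatedPrimes_quotient_range_mulVecLin [UniqueFactorizationMonoid R]
    {A : Matrix ι ι R} (hA : A.det ≠ 0) :
    associatedPrimes R ((ι → R) ⧸ LinearMap.range A.mulVecLin) =
      associatedPrimes R (R ⧸ Ideal.span {A.det}) :=
  (associatedPrimes_quotient_range_mulVecLin_subset hA).antisymm
    (associatedPrimes_quotient_span_det_subset hA)

end Matrix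

theorem colSpan_eq_range_mulVecLin {d k n : ℕ} (A : Matrix (Fin k) (Fin n) (LaurentR d)) :
    colSpan A = LinearMap.range A.mulVecLin := by
  rw [Matrix.range_mulVecLin]
  rfl

theorem associated_primes_of_MA_eq_associated_primes_of_det (d k : ℕ)
    (A : Matrix (Fin k) (Fin k) (LaurentR d)) (hA : A.det ≠ 0) :
    associatedPrimes (LaurentR d) (MA A)
      = associatedPrimes (LaurentR d)
          (LaurentR d ⧸ Ideal.span ({A.det} : Set (LaurentR d))) := by
  unfold MA
  rw [colSpan_eq_range_mulVecLin]
  exact Matrix.associatedPrimes_quotient_range_mulVecLin hA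
end
end

section
/- Let A be a k×k matrix over R and n ≥ 1. The quotient ring S_n = R/⟨u₁^n − 1,…,u_d^n − 1⟩ is a free ℤ-module of rank n^d, and multiplication by A defines a ℤ-linear endomorphism of S_n^k ≅ ℤ^{k·n^d}. The determinant of this ℤ-linear endomorphism equals ∏_ω det(ev_ω A), the product taken over all d-tuples ω ∈ (μ_n)^d of n-th roots of unity, where ev_ω A denotes the complex k×k matrix obtained by evaluating each entry of A at ω. -/
noncomputable section

/-- The monomial `uᵢ`. -/
def uvar {d : ℕ} (i : Fin d) : LaurentR d :=
  AddMonoidAlgebra.single (Pi.single i (1 : ℤ)) (1 : ℤ)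

/-- The ideal `⟨u₁ⁿ − 1, …, u_dⁿ − 1⟩ ⊆ R`. -/
def In (d n : ℕ) : Ideal (LaurentR d) :=
  Ideal.span (Set.range fun i : Fin d => uvar i ^ n - 1)

/-- The quotient ring `S_n = R/⟨u₁ⁿ − 1, …, u_dⁿ − 1⟩`. -/
abbrev Sn (d n : ℕ) : Type := LaurentR d ⧸ In d n

/-- Multiplication by the matrix `A` on `S_nᵏ`, viewed as a `ℤ`-linear endomorphism. -/
def mulByA (d n k : ℕ) (A : Matrix (Fin k) (Fin k) (LaurentR d)) :
    (Fin k → Sn d n) →ₗ[ℤ] (Fin k → Sn d n) :=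
  ((A.map (Ideal.Quotient.mk (In d n))).mulVecLin).toAddMonoidHom.toIntLinearMap

/-!
Since `S_nᵏ` is free over `S_n`, the `ℤ`-determinant of `A` on `S_nᵏ` is the norm
`N_{S_n/ℤ}(det A)`; and `S_n` is `ℤ`-free on the monomials `u^m`, `m ∈ (ℤ/n)^d`.
The `n^d` evaluations of `S_n` at `d`-tuples of `n`-th roots of unity are distinct ring
homomorphisms to `ℂ`, hence linearly independent by Dedekind's lemma, so jointly they carry
a `ℤ`-basis of `S_n` to a `ℂ`-basis of `ℂ^{n^d}`. In that basis multiplication by `x` is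
diagonal with entries `ev_ω x`, so `N(x) = ∏_ω ev_ω x`, and `ev_ω (det A) = det (ev_ω A)`.
-/

open Module

theorem LinearMap.algebraMap_det_eq_of_intertwine {R K V W ι : Type*} [CommRing R] [CommRing K]
    [Algebra R K] [AddCommGroup V] [Module R V] [AddCommGroup W] [Module K W] [Module R W]
    [IsScalarTower R K W] [Fintype ι] [DecidableEq ι]
    (f : V →ₗ[R] V) (g : W →ₗ[K] W) (T : V →ₗ[R] W) (b : Basis ι R V) (c : Basis ι K W)
    (hbc : ∀ i, T (b i) = c i) (hcomm : ∀ v, T (f v) = g (T v)) :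
    algebraMap R K (LinearMap.det f) = LinearMap.det g := by
  have hrepr : ∀ v i, c.repr (T v) i = algebraMap R K (b.repr v i) := fun v i =>
    congrArg (· v) <|
      b.ext (f₁ := (Finsupp.lapply i ∘ₗ c.repr.toLinearMap).restrictScalars R ∘ₗ T)
        (f₂ := Algebra.linearMap R K ∘ₗ b.coord i) fun j => by
          simp [hbc, Finsupp.single_apply, apply_ite (algebraMap R K)]
  have hmat : LinearMap.toMatrix c c g = (LinearMap.toMatrix b b f).map (algebraMap R K) := by
    ext i j
    simp only [LinearMap.toMatrix_apply, Matrix.map_apply, ← hbc, ← hcomm, hrepr]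
  rw [← LinearMap.det_toMatrix b, ← LinearMap.det_toMatrix c, hmat, RingHom.map_det]
  rfl

theorem Submodule.span_range_eval_monoidHom_eq_top {M K Ω : Type*} [Monoid M] [Field K]
    [Fintype Ω] {φ : Ω → M →* K} (hφ : Function.Injective φ) :
    Submodule.span K (Set.range fun (m : M) ω => φ ω m) = ⊤ := by
  classical
  by_contra hne
  obtain ⟨l, hl, hle⟩ := Submodule.exists_le_ker_of_lt_top _ (lt_top_iff_ne_top.2 hne)
  have hind := (linearIndependent_monoidHom M K).comp φ hφ
  have hzero : ∀ ω, l (Pi.single ω 1) = 0 := by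
    refine Fintype.linearIndependent_iff.1 hind _ (funext fun m => ?_)
    have hm : l (fun ω => φ ω m) = 0 := hle (Submodule.subset_span ⟨m, rfl⟩)
    rw [← (Pi.basisFun K Ω).sum_repr (fun ω => φ ω m)] at hm
    simpa [mul_comm] using hm
  exact hl (LinearMap.pi_ext' fun ω => LinearMap.ext_ring (by simpa using hzero ω))

theorem Algebra.algebraMap_norm_eq_prod_of_injective {R S K Ω : Type*} [CommRing R] [CommRing S]
    [Algebra R S] [Module.Free R S] [Module.Finite R S] [Field K] [Algebra R K] [Fintype Ω]
    {φ : Ω → S →ₐ[R] K} (hφ : Function.Injective φ) (hcard : Fintype.card Ω = finrank R S)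
    (x : S) : algebraMap R K (Algebra.norm R x) = ∏ ω, φ ω x := by
  classical
  have : Nontrivial R := (algebraMap R K).domain_nontrivial
  let b := Module.Free.chooseBasis R S
  let T : S →ₗ[R] Ω → K := LinearMap.pi fun ω => (φ ω).toLinearMap
  have hspan : ⊤ ≤ Submodule.span K (Set.range (T ∘ b)) := by
    rw [← Submodule.span_range_eval_monoidHom_eq_top (φ := fun ω => (φ ω : S →* K))
      fun ω ω' h => hφ (AlgHom.ext (DFunLike.congr_fun h :))]
    refine Submodule.span_le.2 ?_
    rintro _ ⟨s, rfl⟩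
    refine Submodule.span_le_restrictScalars R K _ ?_
    rw [Set.range_comp, ← Submodule.map_span, b.span_eq]
    exact ⟨s, trivial, rfl⟩
  let c := basisOfTopLeSpanOfCardEqFinrank (T ∘ b) hspan (by
    rw [Module.finrank_fintype_fun_eq_card, hcard, Module.finrank_eq_card_chooseBasisIndex])
  rw [Algebra.norm_apply, LinearMap.algebraMap_det_eq_of_intertwine (lmul R S x)
    (Matrix.toLin' (Matrix.diagonal fun ω => φ ω x)) T b c
    (fun i => by simp [c, coe_basisOfTopLeSpanOfCardEqFinrank])
    (fun s => funext fun ω => by simp [T, Matrix.mulVec_diagonal]),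
    LinearMap.det_toLin', Matrix.det_diagonal]

namespace LaurentR

variable {d : ℕ}

def evMonoidHom (z : Fin d → ℂ) (hz : ∀ i, z i ≠ 0) : Multiplicative (Fin d → ℤ) →* ℂ where
  toFun m := ∏ i, z i ^ m.toAdd i
  map_one' := by simp
  map_mul' a b := by
    simp only [toAdd_mul, Pi.add_apply, zpow_add₀ (hz _), Finset.prod_mul_distrib]

def evRingHom (z : Fin d → ℂ) (hz : ∀ i, z i ≠ 0) : LaurentR d →+* ℂ :=
  (AddMonoidAlgebra.lift ℤ ℂ (Fin d → ℤ) (evMonoidHom z hz)).toRingHom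

theorem coe_evRingHom (z : Fin d → ℂ) (hz : ∀ i, z i ≠ 0) : ⇑(evRingHom z hz) = ev z := by
  funext f
  simp only [evRingHom, AlgHom.toRingHom_eq_coe, RingHom.coe_coe, AddMonoidAlgebra.lift_apply,
    zsmul_eq_mul, ev]
  rfl

theorem ev_uvar (z : Fin d → ℂ) (i : Fin d) : ev z (uvar i) = z i := by
  simp [ev, uvar, Pi.single_apply]

end LaurentR

namespace Sn

variable {d n : ℕ} {T : Type*} [CommRing T]

theorem In_le_ker {φ : LaurentR d →+* T}
    (hφ : ∀ i, φ (uvar i) ^ n = 1) : In d n ≤ RingHom.ker φ :=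
  Ideal.span_le.2 <| Set.range_subset_iff.2 fun i => by simp [hφ]

def lift (φ : LaurentR d →+* T) (hφ : ∀ i, φ (uvar i) ^ n = 1) :
    Sn d n →+* T :=
  Ideal.Quotient.lift (In d n) φ fun _ ha => In_le_ker hφ ha

@[simp]
theorem lift_mk (φ : LaurentR d →+* T) (hφ : ∀ i, φ (uvar i) ^ n = 1)
    (f : LaurentR d) : lift φ hφ (Ideal.Quotient.mk (In d n) f) = φ f :=
  rfl

def eval [NeZero n] (z : Fin d → ℂ) (hz : ∀ i, z i ^ n = 1) : Sn d n →+* ℂ :=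
  lift (LaurentR.evRingHom z fun i => ne_zero_pow (NeZero.ne n) (by rw [hz i]; exact one_ne_zero))
    fun i => by rw [LaurentR.coe_evRingHom, LaurentR.ev_uvar, hz]

@[simp]
theorem eval_mk [NeZero n] (z : Fin d → ℂ) (hz : ∀ i, z i ^ n = 1) (f : LaurentR d) :
    eval z hz (Ideal.Quotient.mk (In d n) f) = ev z f := by
  simp [eval, LaurentR.coe_evRingHom]

def toGroupAlgebra (d n : ℕ) : Sn d n →+* AddMonoidAlgebra ℤ (Fin d → ZMod n) :=
  lift (AddMonoidAlgebra.mapDomainRingHom ℤ ((Int.castAddHom (ZMod n)).compLeft (Fin d)))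
    fun i => by
      rw [uvar, AddMonoidAlgebra.mapDomainRingHom_apply, AddMonoidAlgebra.mapDomain_single,
        AddMonoidAlgebra.single_pow, one_pow, ← map_nsmul]
      have hred : (Int.castAddHom (ZMod n)).compLeft (Fin d) (n • Pi.single i 1) = 0 := by
        ext j
        by_cases h : j = i <;> simp [h]
      rw [hred, AddMonoidAlgebra.one_def]

def monomialUnit (d n : ℕ) : Multiplicative (Fin d → ℤ) →* (Sn d n)ˣ :=
  ((Ideal.Quotient.mk (In d n)).toMonoidHom.comp (AddMonoidAlgebra.of ℤ (Fin d → ℤ))).toHomUnits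

theorem coe_monomialUnit (a : Fin d → ℤ) :
    (monomialUnit d n (.ofAdd a) : Sn d n) = Ideal.Quotient.mk (In d n) (.single a 1) :=
  rfl

theorem monomialUnit_eq_prod (a : Fin d → ℤ) :
    monomialUnit d n (.ofAdd a) = ∏ i, monomialUnit d n (.ofAdd (Pi.single i 1)) ^ a i := by
  conv_lhs => rw [← Finset.univ_sum_single a]
  simp only [ofAdd_sum, map_prod, ← map_zpow, ← ofAdd_zsmul, ← Pi.single_smul, smul_eq_mul,
    mul_one]

theorem monomialUnit_single_pow (i : Fin d) :
    monomialUnit d n (.ofAdd (Pi.single i 1)) ^ n = 1 := by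
  ext
  rw [Units.val_pow_eq_pow_val, coe_monomialUnit, Units.val_one, ← map_pow,
    ← map_one (Ideal.Quotient.mk _), Ideal.Quotient.eq]
  exact Ideal.subset_span ⟨i, rfl⟩

theorem monomialUnit_emod (a : Fin d → ℤ) :
    monomialUnit d n (.ofAdd a) = monomialUnit d n (.ofAdd fun i => a i % n) := by
  rw [monomialUnit_eq_prod, monomialUnit_eq_prod]
  exact Finset.prod_congr rfl fun i _ => zpow_eq_zpow_emod' _ (monomialUnit_single_pow i)

def monomial (g : Fin d → ZMod n) : Sn d n :=
  Ideal.Quotient.mk (In d n) (.single (fun i => ((g i).val : ℤ)) 1)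

theorem mk_single_one [NeZero n] (a : Fin d → ℤ) :
    Ideal.Quotient.mk (In d n) (.single a 1) = monomial fun i => (a i : ZMod n) := by
  rw [← coe_monomialUnit, monomialUnit_emod, monomial, ← coe_monomialUnit]
  simp only [ZMod.val_intCast]

theorem toGroupAlgebra_monomial [NeZero n] (g : Fin d → ZMod n) :
    toGroupAlgebra d n (monomial g) = .single g 1 := by
  simp only [toGroupAlgebra, monomial, lift_mk, AddMonoidAlgebra.mapDomainRingHom_apply,
    AddMonoidAlgebra.mapDomain_single]
  congr 1
  ext i
  simp [AddMonoidHom.compLeft]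

theorem linearIndependent_monomial [NeZero n] :
    LinearIndependent ℤ (monomial (d := d) (n := n)) :=
  .of_comp (toGroupAlgebra d n).toIntAlgHom.toLinearMap <| by
    have h : ⇑(toGroupAlgebra d n).toIntAlgHom.toLinearMap ∘ monomial =
        AddMonoidAlgebra.basis (Fin d → ZMod n) ℤ :=
      funext fun g => by simp [toGroupAlgebra_monomial]
    rw [h]
    exact (AddMonoidAlgebra.basis _ ℤ).linearIndependent

theorem span_monomial [NeZero n] :
    ⊤ ≤ Submodule.span ℤ (Set.range (monomial (d := d) (n := n))) := by
  rintro x -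
  obtain ⟨f, rfl⟩ := Ideal.Quotient.mk_surjective x
  induction f using AddMonoidAlgebra.induction_linear with
  | zero => simp
  | add f g hf hg => rw [map_add]; exact add_mem hf hg
  | single a c =>
    rw [← mul_one c, ← AddMonoidAlgebra.smul_single', map_zsmul, mk_single_one]
    exact Submodule.smul_mem _ _ (Submodule.subset_span ⟨_, rfl⟩)

def monomialBasis (d n : ℕ) [NeZero n] : Basis (Fin d → ZMod n) ℤ (Sn d n) :=
  .mk linearIndependent_monomial span_monomial

theorem finrank_eq (d n : ℕ) [NeZero n] : finrank ℤ (Sn d n) = n ^ d := by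
  simp [finrank_eq_card_basis (monomialBasis d n)]

end Sn

def rootOfUnityPoint {d : ℕ} (n : ℕ) (j : Fin d → Fin n) : Fin d → ℂ :=
  fun i => Complex.exp (2 * Real.pi * Complex.I * ((j i : ℕ) : ℂ) / (n : ℂ))

section rootOfUnityPoint

variable {d n : ℕ}

theorem rootOfUnityPoint_eq_pow (j : Fin d → Fin n) (i : Fin d) :
    rootOfUnityPoint n j i = Complex.exp (2 * Real.pi * Complex.I / n) ^ (j i : ℕ) := by
  rw [rootOfUnityPoint, ← Complex.exp_nat_mul]
  ring_nf

theorem rootOfUnityPoint_pow_eq_one [NeZero n] (j : Fin d → Fin n) (i : Fin d) :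
    rootOfUnityPoint n j i ^ n = 1 := by
  rw [rootOfUnityPoint_eq_pow, pow_right_comm,
    (Complex.isPrimitiveRoot_exp n (NeZero.ne n)).pow_eq_one, one_pow]

theorem rootOfUnityPoint_injective [NeZero n] : Function.Injective (rootOfUnityPoint (d := d) n) :=
  fun j j' h => funext fun i => Fin.ext <|
    (Complex.isPrimitiveRoot_exp n (NeZero.ne n)).pow_inj (j i).isLt (j' i).isLt <| by
      simpa only [rootOfUnityPoint_eq_pow] using congrFun h i

end rootOfUnityPoint

theorem Sn.eval_rootOfUnityPoint_injective (d n : ℕ) [NeZero n] :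
    Function.Injective fun j : Fin d → Fin n =>
      (Sn.eval (rootOfUnityPoint n j) (rootOfUnityPoint_pow_eq_one j)).toIntAlgHom :=
  fun j j' h => rootOfUnityPoint_injective <| funext fun i => by
    simpa [LaurentR.ev_uvar] using
      DFunLike.congr_fun h (Ideal.Quotient.mk (In d n) (uvar i))

theorem mulByA_eq_restrictScalars (d n k : ℕ) (A : Matrix (Fin k) (Fin k) (LaurentR d)) :
    mulByA d n k A = (Matrix.toLin' (A.map (Ideal.Quotient.mk (In d n)))).restrictScalars ℤ :=
  rfl

theorem det_of_matrix_action_on_Sn (d n k : ℕ) (hn : 1 ≤ n)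
    (A : Matrix (Fin k) (Fin k) (LaurentR d)) :
    -- `S_n` is a free `ℤ`-module of rank `n^d`
    Module.Free ℤ (Sn d n) ∧ Module.finrank ℤ (Sn d n) = n ^ d ∧
    -- and the determinant of the `ℤ`-linear endomorphism `A` of `S_nᵏ ≅ ℤ^{k·n^d}`
    -- is the product of the determinants of the evaluations of `A`
    -- at all `d`-tuples of `n`-th roots of unity
    ((LinearMap.det (mulByA d n k A) : ℤ) : ℂ)
      = ∏ j : Fin d → Fin n,
          (A.map (ev (fun i =>
            Complex.exp (2 * Real.pi * Complex.I * ((j i : ℕ) : ℂ) / (n : ℂ))))).det := by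
  have : NeZero n := ⟨by omega⟩
  have hfree : Module.Free ℤ (Sn d n) := .of_basis (Sn.monomialBasis d n)
  have : Module.Finite ℤ (Sn d n) := .of_basis (Sn.monomialBasis d n)
  refine ⟨hfree, Sn.finrank_eq d n, ?_⟩
  rw [mulByA_eq_restrictScalars, LinearMap.det_restrictScalars, LinearMap.det_toLin',
    ← eq_intCast (algebraMap ℤ ℂ)]
  refine (Algebra.algebraMap_norm_eq_prod_of_injective (Sn.eval_rootOfUnityPoint_injective d n)
    (by simp [Sn.finrank_eq]) _).trans (Finset.prod_congr rfl fun j _ => ?_)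
  rw [RingHom.toIntAlgHom_apply, RingHom.map_det, RingHom.mapMatrix_apply, Matrix.map_map]
  simp only [Function.comp_def, Sn.eval_mk]
  rfl
end
end
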